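/- Let n be a positive integer, p ∈ [0,1], and let G_{n,p} be the binomial random graph on n labeled vertices where each of the C(n,2) possible edges is included independently with probability p. Then for every t ≥ 0, P[ |log r(G_{n,p}) − E(log r(G_{n,p}))| > t ] ≤ 2·exp( −t² / (32 n (log n)²) ), where log is base 2. In particular, for any function p = p(n) and any function t(n) with t(n)/(√n · log n) → ∞, the probability that |log r(G_{n,p}) − E(log r(G_{n,p}))| > t(n) tends to 0 as n → ∞. -/

import Mathlib

/-!
Expose `G_{n,p}` vertex by vertex, each potential edge together with its larger endpoint: the
`n` blocks are independent, so by McDiarmid's inequality (Hoeffding's lemma on each block plus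
Fubini) it suffices that changing the edges at one vertex `i` changes `log r` by at most
`log (3n)`, for then `log r - E log r` is sub-Gaussian with parameter `n log² (3n) / 4`, which is
at most `16 n log² n` once `n ≥ 2`.

The vertex bound is `r(G) ≤ 3n · r(G')` whenever `G - i = G' - i`. Put `R = r(G - i) ≤ r(G')` and
colour `K_N` with `N > 2nR`. Some vertex `w₀` has a colour class `B` of size at least `nR`, say in
colour `b`. A `b`-coloured copy of `G - i` in `B` extends through `w₀`. If some `w ∈ B` has `R`
neighbours in `B` of colour `!b`, they contain a monochromatic `G - i`, which either lies in `B` in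
colour `b` or extends through `w`. Otherwise every vertex of `B` misses fewer than `R` others in
colour `b`, and a greedy choice finds a `b`-clique on `n` vertices in `B`.
-/

open MeasureTheory

/-- A 2-coloring `χ` of the edges of `K_N` contains a monochromatic copy of `H`. -/
def HasMonoCopy {α : Type*} (H : SimpleGraph α) (N : ℕ) (χ : Sym2 (Fin N) → Bool) : Prop :=
  ∃ (b : Bool) (f : α ↪ Fin N), ∀ u v : α, H.Adj u v → χ s(f u, f v) = b

/-- The Ramsey number of a graph `H`. -/
noncomputable def ramseyNumber {α : Type*} (H : SimpleGraph α) : ℕ :=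
  sInf {N : ℕ | ∀ χ : Sym2 (Fin N) → Bool, HasMonoCopy H N χ}

/-- The sample space for `G(n,p)`: one Boolean per potential edge (non-diagonal pair). -/
abbrev ErdosRenyiOmega (n : ℕ) : Type := {e : Sym2 (Fin n) // ¬ e.IsDiag} → Bool

/-- The product Bernoulli(`p`) measure on `ErdosRenyiOmega n`, modelling `G(n,p)` with all
edges present independently with probability `p`. -/
noncomputable def erdosRenyi (n : ℕ) (p : ENNReal) (hp : p ≤ 1) :
    Measure (ErdosRenyiOmega n) :=
  Measure.pi fun _ => (PMF.bernoulli p.toNNReal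
    (by simpa using ENNReal.toNNReal_mono ENNReal.one_ne_top hp)).toMeasure

/-- The graph on `Fin n` determined by a sample point. -/
def sampleGraph (n : ℕ) (ω : ErdosRenyiOmega n) : SimpleGraph (Fin n) :=
  SimpleGraph.fromEdgeSet {e | ∃ h : ¬ e.IsDiag, ω ⟨e, h⟩ = true}

/-- The log (base 2) of the Ramsey number of the sampled random graph. -/
noncomputable def logRamsey (n : ℕ) (ω : ErdosRenyiOmega n) : ℝ :=
  Real.logb 2 (ramseyNumber (sampleGraph n ω))

open ProbabilityTheory Finset
open scoped NNReal

namespace ProbabilityTheory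

variable {Ω : Type*} {mΩ : MeasurableSpace Ω} {μ : Measure Ω}

lemma HasSubgaussianMGF.measure_abs_ge_le [IsFiniteMeasure μ] {X : Ω → ℝ} {c : ℝ≥0}
    (h : HasSubgaussianMGF X c μ) {ε : ℝ} (hε : 0 ≤ ε) :
    μ {ω | ε ≤ |X ω|} ≤ ENNReal.ofReal (2 * Real.exp (-ε ^ 2 / (2 * c))) := by
  have hsplit : {ω | ε ≤ |X ω|} = {ω | ε ≤ X ω} ∪ {ω | ε ≤ (-X) ω} := by
    ext ω; simp [le_abs', le_neg, or_comm]
  rw [← ofReal_measureReal, hsplit]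
  gcongr
  calc μ.real ({ω | ε ≤ X ω} ∪ {ω | ε ≤ (-X) ω})
      ≤ μ.real {ω | ε ≤ X ω} + μ.real {ω | ε ≤ (-X) ω} := measureReal_union_le _ _
    _ ≤ _ := by linarith [h.measure_ge_le hε, h.neg.measure_ge_le hε]

section Finite

variable [Finite Ω] [MeasurableSingletonClass Ω] [IsProbabilityMeasure μ]

lemma hasSubgaussianMGF_sub_integral_of_abs_sub_le {X : Ω → ℝ} {c : ℝ≥0}
    (hX : ∀ a b, |X a - X b| ≤ c) :
    HasSubgaussianMGF (fun ω => X ω - ∫ ω', X ω' ∂μ) ((c / 2) ^ 2) μ := by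
  have := nonempty_of_isProbabilityMeasure μ
  obtain ⟨a₀, ha₀⟩ := Finite.exists_min X
  have hIcc : ∀ ω, X ω ∈ Set.Icc (X a₀) (X a₀ + c) := fun ω =>
    ⟨ha₀ ω, by linarith [(abs_le.mp (hX ω a₀)).2]⟩
  simpa using hasSubgaussianMGF_of_mem_Icc Measurable.of_discrete.aemeasurable (ae_of_all μ hIcc)

lemma abs_integral_sub_integral_le {X Y : Ω → ℝ} {c : ℝ} (h : ∀ ω, |X ω - Y ω| ≤ c) :
    |∫ ω, X ω ∂μ - ∫ ω, Y ω ∂μ| ≤ c := by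
  rw [← integral_sub Integrable.of_finite Integrable.of_finite, ← Real.norm_eq_abs]
  simpa using
    norm_integral_le_of_norm_le_const (μ := μ) (f := fun ω => X ω - Y ω) (ae_of_all _ h)

end Finite

section Pi

variable {m : ℕ} {K : Fin (m + 1) → Type*} [∀ i, MeasurableSpace (K i)] [∀ i, Finite (K i)]
  [∀ i, MeasurableSingletonClass (K i)] (μ : ∀ i, Measure (K i))
  [∀ i, IsProbabilityMeasure (μ i)]

lemma integral_pi_eq_integral_integral_insertNth (i : Fin (m + 1)) (f : (∀ j, K j) → ℝ) :
    ∫ x, f x ∂Measure.pi μ =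
      ∫ x', ∫ a, f (i.insertNth a x') ∂μ i ∂Measure.pi fun j => μ (i.succAbove j) := by
  rw [← (measurePreserving_piFinSuccAbove μ i).symm.integral_comp',
    integral_prod_symm _ Integrable.of_finite]
  rfl

theorem hasSubgaussianMGF_sub_integral_pi_of_insertNth (i : Fin (m + 1)) {f : (∀ j, K j) → ℝ}
    {c C : ℝ≥0}
    (hfiber : ∀ x', HasSubgaussianMGF
      (fun a => f (i.insertNth a x') - ∫ b, f (i.insertNth b x') ∂μ i) c (μ i))
    (havg : HasSubgaussianMGF
      (fun x' => ∫ a, f (i.insertNth a x') ∂μ i - ∫ y, f y ∂Measure.pi μ) C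
      (Measure.pi fun j => μ (i.succAbove j))) :
    HasSubgaussianMGF (fun x => f x - ∫ y, f y ∂Measure.pi μ) (c + C) (Measure.pi μ) := by
  set E := ∫ y, f y ∂Measure.pi μ
  let g x' := ∫ a, f (i.insertNth a x') ∂μ i
  refine ⟨fun t => Integrable.of_finite, fun t => ?_⟩
  calc mgf (fun x => f x - E) (Measure.pi μ) t
      = ∫ x', Real.exp (t * (g x' - E)) * mgf (fun a => f (i.insertNth a x') - g x') (μ i) t
          ∂Measure.pi fun j => μ (i.succAbove j) := by
        simp only [mgf]
        rw [integral_pi_eq_integral_integral_insertNth μ i]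
        refine integral_congr_ae (ae_of_all _ fun x' => ?_)
        simp only [← integral_const_mul, ← Real.exp_add]
        congr! 3
        ring
    _ ≤ ∫ x', Real.exp (t * (g x' - E)) * Real.exp (c * t ^ 2 / 2)
          ∂Measure.pi fun j => μ (i.succAbove j) :=
        integral_mono Integrable.of_finite Integrable.of_finite fun x' =>
          mul_le_mul_of_nonneg_left ((hfiber x').mgf_le t) (Real.exp_pos _).le
    _ ≤ Real.exp (C * t ^ 2 / 2) * Real.exp (c * t ^ 2 / 2) := by
        rw [integral_mul_const]
        gcongr
        exact havg.mgf_le t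
    _ = Real.exp (↑(c + C) * t ^ 2 / 2) := by
        rw [← Real.exp_add, NNReal.coe_add]
        ring_nf

end Pi

/-- **McDiarmid's inequality** -/
theorem hasSubgaussianMGF_sub_integral_of_bounded_differences {m : ℕ} {K : Fin m → Type*}
    [∀ i, MeasurableSpace (K i)] [∀ i, Finite (K i)] [∀ i, MeasurableSingletonClass (K i)]
    (μ : ∀ i, Measure (K i)) [∀ i, IsProbabilityMeasure (μ i)] {f : (∀ i, K i) → ℝ}
    {c : Fin m → ℝ≥0} (hf : ∀ i x y, (∀ j, j ≠ i → x j = y j) → |f x - f y| ≤ c i) :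
    HasSubgaussianMGF (fun x => f x - ∫ y, f y ∂Measure.pi μ) (∑ i, (c i / 2) ^ 2)
      (Measure.pi μ) := by
  induction m with
  | zero =>
    have hzero : (fun x => f x - ∫ y, f y ∂Measure.pi μ) = fun _ => 0 := by
      funext x
      rw [sub_eq_zero, integral_congr_ae (ae_of_all _ fun y => congrArg f (Subsingleton.elim y x)),
        integral_const, probReal_univ, one_smul]
    rw [Fin.sum_univ_zero, hzero]
    exact HasSubgaussianMGF.fun_zero
  | succ m ih =>
    have hfiber (x') (a b : K 0) : |f (Fin.insertNth 0 a x') - f (Fin.insertNth 0 b x')| ≤ c 0 :=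
      hf 0 _ _ fun k hk => by
        obtain rfl | ⟨k, rfl⟩ := Fin.eq_self_or_eq_succAbove 0 k
        · exact absurd rfl hk
        · simp only [Fin.insertNth_apply_succAbove]
    have havg (j x' y') (hxy : ∀ k, k ≠ j → x' k = y' k) :
        |∫ a, f (Fin.insertNth 0 a x') ∂μ 0 - ∫ a, f (Fin.insertNth 0 a y') ∂μ 0| ≤
          c (Fin.succAbove 0 j) :=
      abs_integral_sub_integral_le fun a => hf _ _ _ fun k hk => by
        obtain rfl | ⟨k, rfl⟩ := Fin.eq_self_or_eq_succAbove 0 k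
        · simp only [Fin.insertNth_apply_same]
        · simp only [Fin.insertNth_apply_succAbove]
          exact hxy k fun h => hk (h ▸ rfl)
    rw [Fin.sum_univ_succAbove _ 0]
    refine hasSubgaussianMGF_sub_integral_pi_of_insertNth μ 0
      (fun x' => hasSubgaussianMGF_sub_integral_of_abs_sub_le (hfiber x')) ?_
    rw [integral_pi_eq_integral_integral_insertNth μ 0]
    exact ih (fun j => μ (Fin.succAbove 0 j)) havg

end ProbabilityTheory

namespace MeasurableEquiv

variable {ι κ : Type*} {X : ι → Type*} [∀ i, MeasurableSpace (X i)]

def piFibers (g : ι → κ) : (∀ i, X i) ≃ᵐ ∀ k, ∀ i : {i // g i = k}, X i :=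
  (piCongrLeft X (Equiv.sigmaFiberEquiv g)).symm.trans
    (piCurry fun k (i : {i // g i = k}) => X i)

@[simp]
lemma piFibers_symm_apply (g : ι → κ) (x : ∀ k, ∀ i : {i // g i = k}, X i) (i : ι) :
    (piFibers g).symm x i = x (g i) ⟨i, rfl⟩ := rfl

end MeasurableEquiv

open MeasurableEquiv in
theorem MeasureTheory.measurePreserving_piFibers {ι κ : Type*} [Fintype ι] [Fintype κ]
    [DecidableEq κ] {X : ι → Type*} [∀ i, MeasurableSpace (X i)] (μ : ∀ i, Measure (X i))
    [∀ i, IsProbabilityMeasure (μ i)] (g : ι → κ) :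
    MeasurePreserving (piFibers g) (Measure.pi μ)
      (Measure.pi fun k => Measure.pi fun i : {i // g i = k} => μ i) := by
  refine (measurePreserving_piCongrLeft μ (Equiv.sigmaFiberEquiv g)).symm _ |>.trans ?_
  refine ⟨(piCurry fun k (i : {i // g i = k}) => X i).measurable, ?_⟩
  simp only [← Measure.infinitePi_eq_pi]
  exact Measure.infinitePi_map_piCurry fun k (i : {i // g i = k}) => μ i

def colorGraph {N : ℕ} (χ : Sym2 (Fin N) → Bool) (b : Bool) : SimpleGraph (Fin N) where
  Adj u v := u ≠ v ∧ χ s(u, v) = b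
  symm := ⟨fun u _ h => ⟨h.1.symm, Sym2.eq_swap (a := u) ▸ h.2⟩⟩
  loopless := ⟨fun _ h => h.1 rfl⟩

instance {N : ℕ} (χ : Sym2 (Fin N) → Bool) (b : Bool) : DecidableRel (colorGraph χ b).Adj :=
  fun u v => inferInstanceAs (Decidable (u ≠ v ∧ χ s(u, v) = b))

lemma colorGraph_not {N : ℕ} (χ : Sym2 (Fin N) → Bool) (b : Bool) :
    colorGraph χ (!b) = (colorGraph χ b)ᶜ := by
  ext u v
  simp only [colorGraph, SimpleGraph.compl_adj, Bool.eq_not, ne_eq]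
  tauto

theorem SimpleGraph.exists_isNClique_of_card_compl_neighbors_le {V : Type*} [DecidableEq V]
    (G : SimpleGraph V) [DecidableRel G.Adj] {d : ℕ} (k : ℕ) (A : Finset V)
    (hA : ∀ w ∈ A, #{u ∈ A | Gᶜ.Adj w u} ≤ d) (hk : k * (d + 1) ≤ #A) :
    ∃ S ⊆ A, G.IsNClique k S := by
  induction k generalizing A with
  | zero => exact ⟨∅, empty_subset _, by simp⟩
  | succ k ih =>
    obtain ⟨w, hw⟩ : A.Nonempty := card_pos.mp (by nlinarith)
    set A' := {u ∈ A | w ≠ u ∧ G.Adj w u}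
    have hA'A : A' ⊆ A := filter_subset _ _
    have hcover : A ⊆ A' ∪ insert w {u ∈ A | Gᶜ.Adj w u} := by
      intro u hu
      by_cases hwu : w = u
      · simp [hwu]
      · by_cases hadj : G.Adj w u
        · exact mem_union_left _ (mem_filter.mpr ⟨hu, hwu, hadj⟩)
        · exact mem_union_right _ (mem_insert_of_mem (mem_filter.mpr ⟨hu, by
            simp [SimpleGraph.compl_adj, hwu, hadj]⟩))
    have hcard : #A ≤ #A' + (d + 1) :=
      (card_le_card hcover).trans <| (card_union_le _ _).trans <|
        Nat.add_le_add_left ((card_insert_le _ _).trans (Nat.add_le_add_right (hA w hw) 1)) _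
    obtain ⟨S, hSA', hS⟩ := ih A'
      (fun u hu => (card_le_card (filter_subset_filter _ hA'A)).trans (hA u (hA'A hu)))
      (by nlinarith)
    refine ⟨insert w S, insert_subset hw (hSA'.trans hA'A), hS.insert fun u hu => ?_⟩
    exact (mem_filter.mp (hSA' hu)).2.2

section MonoCopy

variable {α : Type*} {N : ℕ}

lemma exists_mono_embedding_into_of_card_le {H : SimpleGraph α} {R : ℕ}
    (hR : ∀ χ : Sym2 (Fin R) → Bool, HasMonoCopy H R χ) (χ : Sym2 (Fin N) → Bool)
    {A : Finset (Fin N)} (hA : R ≤ #A) :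
    ∃ (b : Bool) (f : α ↪ Fin N), (∀ u, f u ∈ A) ∧ ∀ u v, H.Adj u v → χ s(f u, f v) = b := by
  let g : Fin R ↪ Fin N := (Fin.castLEEmb hA).trans (A.orderEmbOfFin rfl).toEmbedding
  obtain ⟨b, f, hf⟩ := hR fun e => χ (e.map g)
  exact ⟨b, f.trans g, fun u => A.orderEmbOfFin_mem rfl _, fun u v huv => hf u v huv⟩

lemma forall_hasMonoCopy_mono {H : SimpleGraph α} {M : ℕ} (hMN : M ≤ N)
    (hM : ∀ χ : Sym2 (Fin M) → Bool, HasMonoCopy H M χ) (χ : Sym2 (Fin N) → Bool) :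
    HasMonoCopy H N χ :=
  let ⟨b, f, _, hf⟩ := exists_mono_embedding_into_of_card_le hM χ (A := univ) (by simpa)
  ⟨b, f, hf⟩

lemma HasMonoCopy.induce {H : SimpleGraph α} {χ : Sym2 (Fin N) → Bool} (h : HasMonoCopy H N χ)
    (s : Set α) : HasMonoCopy (H.induce s) N χ :=
  let ⟨b, f, hf⟩ := h
  ⟨b, (Function.Embedding.subtype _).trans f, fun u v huv => hf u v huv⟩

lemma hasMonoCopy_of_isNClique [Fintype α] (H : SimpleGraph α) {χ : Sym2 (Fin N) → Bool}
    {b : Bool} {S : Finset (Fin N)} (hS : (colorGraph χ b).IsNClique (Fintype.card α) S) :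
    HasMonoCopy H N χ := by
  let e : α ≃ S := Fintype.equivOfCardEq (by rw [Fintype.card_coe, hS.card_eq])
  refine ⟨b, (e.toEmbedding.trans (Function.Embedding.subtype _)), fun u v huv => ?_⟩
  exact (hS.isClique (e u).2 (e v).2 fun h => H.ne_of_adj huv (e.injective (Subtype.ext h))).2

lemma hasMonoCopy_of_extend_induce_compl (H : SimpleGraph α) (i : α) {χ : Sym2 (Fin N) → Bool}
    {b : Bool} {w : Fin N} {A : Finset (Fin N)} (hA : ∀ x ∈ A, (colorGraph χ b).Adj w x)
    (f : ({i}ᶜ : Set α) ↪ Fin N) (hfA : ∀ u, f u ∈ A)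
    (hf : ∀ u v, (H.induce {i}ᶜ).Adj u v → χ s(f u, f v) = b) :
    HasMonoCopy H N χ := by
  classical
  have hfw : ∀ u, f u ≠ w := fun u => (hA _ (hfA u)).1.symm
  let g : α → Fin N := fun v => if hv : v ∈ ({i}ᶜ : Set α) then f ⟨v, hv⟩ else w
  have hg : ∀ v (hv : v ∈ ({i}ᶜ : Set α)), g v = f ⟨v, hv⟩ := fun v hv => dif_pos hv
  have hgi : ∀ v, v ∉ ({i}ᶜ : Set α) → g v = w := fun v hv => dif_neg hv
  refine ⟨b, ⟨g, fun u v huv => ?_⟩, fun u v huv => ?_⟩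
  · by_cases hu : u ∈ ({i}ᶜ : Set α) <;> by_cases hv : v ∈ ({i}ᶜ : Set α)
    · rw [hg u hu, hg v hv] at huv; exact congrArg Subtype.val (f.injective huv)
    · rw [hg u hu, hgi v hv] at huv; exact absurd huv (hfw _)
    · rw [hgi u hu, hg v hv] at huv; exact absurd huv.symm (hfw _)
    · simp only [Set.mem_compl_singleton_iff, not_not] at hu hv; rw [hu, hv]
  · change χ s(g u, g v) = b
    by_cases hu : u ∈ ({i}ᶜ : Set α) <;> by_cases hv : v ∈ ({i}ᶜ : Set α)
    · rw [hg u hu, hg v hv]; exact hf ⟨u, hu⟩ ⟨v, hv⟩ huv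
    · rw [hg u hu, hgi v hv, Sym2.eq_swap]; exact (hA _ (hfA _)).2
    · rw [hgi u hu, hg v hv]; exact (hA _ (hfA _)).2
    · simp only [Set.mem_compl_singleton_iff, not_not] at hu hv
      exact absurd (hu.trans hv.symm) (H.ne_of_adj huv)

lemma exists_le_two_mul_degree_colorGraph (χ : Sym2 (Fin N) → Bool) (w : Fin N) :
    ∃ b, N ≤ 2 * (colorGraph χ b).degree w + 1 := by
  have hsum : (colorGraph χ false).degree w = N - 1 - (colorGraph χ true).degree w := by
    convert (colorGraph χ true).degree_compl w
    · exact colorGraph_not χ true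
    · simp
  have := (colorGraph χ true).degree_lt_card_verts w
  rw [Fintype.card_fin] at this
  by_cases h : N ≤ 2 * (colorGraph χ true).degree w + 1
  · exact ⟨true, h⟩
  · exact ⟨false, by omega⟩

theorem hasMonoCopy_of_forall_hasMonoCopy_induce_compl [Fintype α] (H : SimpleGraph α) (i : α)
    {R : ℕ} (hR0 : 0 < R) (hR : ∀ χ : Sym2 (Fin R) → Bool, HasMonoCopy (H.induce {i}ᶜ) R χ)
    (hN : 2 * Fintype.card α * R < N) (χ : Sym2 (Fin N) → Bool) : HasMonoCopy H N χ := by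
  by_contra hno
  let w₀ : Fin N := ⟨0, by omega⟩
  obtain ⟨b, hb⟩ := exists_le_two_mul_degree_colorGraph χ w₀
  set B := (colorGraph χ b).neighborFinset w₀
  have hB : ∀ w ∈ B, #{u ∈ B | (colorGraph χ b)ᶜ.Adj w u} ≤ R - 1 := by
    intro w hw
    by_contra! hbig
    obtain ⟨b', f, hfA, hf⟩ := exists_mono_embedding_into_of_card_le hR χ
      (A := {u ∈ B | (colorGraph χ b)ᶜ.Adj w u}) (by omega)
    cases Bool.eq_or_eq_not b' b with
    | inl hb' =>
      subst hb'
      exact hno <| hasMonoCopy_of_extend_induce_compl H i (A := B)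
        (fun x hx => (SimpleGraph.mem_neighborFinset _ _ _).mp hx) f
        (fun u => filter_subset _ _ (hfA u)) hf
    | inr hb' =>
      subst hb'
      exact hno <| hasMonoCopy_of_extend_induce_compl H i
        (fun x hx => by rw [colorGraph_not]; exact (mem_filter.mp hx).2) f hfA hf
  have hBcard : Fintype.card α * (R - 1 + 1) ≤ #B := by
    rw [Nat.sub_add_cancel hR0, (colorGraph χ b).card_neighborFinset_eq_degree w₀]
    nlinarith
  obtain ⟨S, -, hS⟩ :=
    (colorGraph χ b).exists_isNClique_of_card_compl_neighbors_le (Fintype.card α) B hB hBcard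
  exact hno (hasMonoCopy_of_isNClique H hS)

end MonoCopy

section RamseyNumber

variable {α : Type*}

theorem exists_forall_hasMonoCopy [Finite α] (H : SimpleGraph α) :
    ∃ N, ∀ χ : Sym2 (Fin N) → Bool, HasMonoCopy H N χ := by
  induction h : Nat.card α generalizing α with
  | zero =>
    have : IsEmpty α := (Nat.card_eq_zero.mp h).resolve_right (not_infinite_iff_finite.mpr ‹_›)
    exact ⟨0, fun χ => ⟨true, Function.Embedding.ofIsEmpty, fun u => isEmptyElim u⟩⟩
  | succ n ih =>
    have : Fintype α := Fintype.ofFinite α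
    obtain ⟨i⟩ : Nonempty α := Nat.card_pos_iff.mp (by omega) |>.1
    obtain ⟨R, hR⟩ := ih (H.induce {i}ᶜ) <| by
      rw [Nat.card_coe_set_eq, Set.ncard_compl, Set.ncard_singleton]; omega
    exact ⟨2 * Fintype.card α * (R + 1) + 1, hasMonoCopy_of_forall_hasMonoCopy_induce_compl H i
      R.succ_pos (forall_hasMonoCopy_mono R.le_succ hR) (Nat.lt_succ_self _)⟩

lemma hasMonoCopy_ramseyNumber [Finite α] (H : SimpleGraph α)
    (χ : Sym2 (Fin (ramseyNumber H)) → Bool) :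
    HasMonoCopy H (ramseyNumber H) χ :=
  Nat.sInf_mem (exists_forall_hasMonoCopy H) χ

lemma ramseyNumber_pos [Finite α] [Nonempty α] (H : SimpleGraph α) : 0 < ramseyNumber H := by
  by_contra! h
  obtain ⟨b, f, -⟩ := hasMonoCopy_ramseyNumber H fun _ => true
  exact (Nat.le_zero.mp h ▸ f (Classical.arbitrary α)).elim0

theorem ramseyNumber_le_of_induce_compl_eq [Fintype α] {H H' : SimpleGraph α} (i : α)
    (h : H.induce {i}ᶜ = H'.induce {i}ᶜ) :
    ramseyNumber H ≤ 3 * Fintype.card α * ramseyNumber H' := by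
  have : Nonempty α := ⟨i⟩
  have hR := ramseyNumber_pos H'
  have hn : 0 < Fintype.card α := Fintype.card_pos
  refine Nat.sInf_le (hasMonoCopy_of_forall_hasMonoCopy_induce_compl H i hR
    (fun χ => h ▸ (hasMonoCopy_ramseyNumber H' χ).induce _) (by nlinarith))

lemma Real.logb_sub_logb_le {b x y c : ℝ} (hb : 1 < b) (hx : 0 < x) (hy : 0 < y)
    (h : x ≤ c * y) :
    logb b x - logb b y ≤ logb b c := by
  have hc : 0 < c := pos_of_mul_pos_left (hx.trans_le h) hy.le
  have := Real.logb_le_logb_of_le hb hx h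
  rw [Real.logb_mul hc.ne' hy.ne'] at this
  linarith

theorem abs_logb_ramseyNumber_sub_le [Fintype α] {H H' : SimpleGraph α} (i : α)
    (h : H.induce {i}ᶜ = H'.induce {i}ᶜ) :
    |Real.logb 2 (ramseyNumber H) - Real.logb 2 (ramseyNumber H')| ≤
      Real.logb 2 (3 * Fintype.card α) := by
  have : Nonempty α := ⟨i⟩
  have hpos : ∀ H'' : SimpleGraph α, (0 : ℝ) < ramseyNumber H'' := fun H'' => by
    exact_mod_cast ramseyNumber_pos H''
  rw [abs_sub_le_iff]
  constructor
  all_goals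
    refine Real.logb_sub_logb_le one_lt_two (hpos _) (hpos _) ?_
    exact_mod_cast ramseyNumber_le_of_induce_compl_eq i (by first | exact h | exact h.symm)

end RamseyNumber

lemma Sym2.sup_mem {α : Type*} [LinearOrder α] (e : Sym2 α) : e.sup ∈ e := by
  induction e using Sym2.ind with
  | _ a b => rcases max_choice a b with h | h <;> simp [h]

instance (n : ℕ) (p : ENNReal) (hp : p ≤ 1) : IsProbabilityMeasure (erdosRenyi n p hp) := by
  unfold erdosRenyi; infer_instance

lemma sampleGraph_induce_compl_eq {n : ℕ} {i : Fin n} {ω ω' : ErdosRenyiOmega n}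
    (h : ∀ e, i ∉ e.1 → ω e = ω' e) :
    (sampleGraph n ω).induce {i}ᶜ = (sampleGraph n ω').induce {i}ᶜ := by
  ext ⟨u, hu⟩ ⟨v, hv⟩
  simp only [SimpleGraph.induce_adj, sampleGraph, SimpleGraph.fromEdgeSet_adj, Set.mem_ofPred_eq]
  refine and_congr_left fun huv => exists_congr fun hd => ?_
  rw [h _ (by simpa [eq_comm] using And.intro hu hv)]

lemma abs_logRamsey_sub_le {n : ℕ} (i : Fin n) {ω ω' : ErdosRenyiOmega n}
    (h : ∀ e, i ∉ e.1 → ω e = ω' e) :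
    |logRamsey n ω - logRamsey n ω'| ≤ Real.logb 2 (3 * n) := by
  simpa only [logRamsey, Fintype.card_fin] using
    abs_logb_ramseyNumber_sub_le i (sampleGraph_induce_compl_eq h)

theorem hasSubgaussianMGF_logRamsey_sub_integral {n : ℕ}
    (μ : {e : Sym2 (Fin n) // ¬ e.IsDiag} → Measure Bool) [∀ e, IsProbabilityMeasure (μ e)] :
    HasSubgaussianMGF (fun ω => logRamsey n ω - ∫ ω', logRamsey n ω' ∂Measure.pi μ)
      (∑ _ : Fin n, ((Real.logb 2 (3 * n)).toNNReal / 2) ^ 2) (Measure.pi μ) := by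
  have hΨ := measurePreserving_piFibers μ fun e => e.1.sup
  set Ψ := MeasurableEquiv.piFibers (X := fun _ => Bool)
    fun e : {e : Sym2 (Fin n) // ¬ e.IsDiag} => e.1.sup
  have h := hasSubgaussianMGF_sub_integral_of_bounded_differences
    (fun i => Measure.pi fun e : {e : {e : Sym2 (Fin n) // ¬ e.IsDiag} // e.1.sup = i} => μ e)
    (f := fun x => logRamsey n (Ψ.symm x)) (c := fun _ => _) fun i x y hxy =>
      (abs_logRamsey_sub_le i fun e he => by
        simp only [Ψ, MeasurableEquiv.piFibers_symm_apply]
        rw [hxy _ fun h => he (h ▸ e.1.sup_mem)]).trans (Real.le_coe_toNNReal _)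
  rw [← hΨ.map_eq] at h
  simpa [Function.comp_def, integral_map_equiv] using h.of_map hΨ.measurable.aemeasurable

lemma Real.logb_three_mul_le {x : ℝ} (hx : 2 ≤ x) : Real.logb 2 (3 * x) ≤ 3 * Real.logb 2 x := by
  calc Real.logb 2 (3 * x) ≤ Real.logb 2 (x ^ 3) :=
        Real.logb_le_logb_of_le one_lt_two (by positivity)
          (by nlinarith [mul_self_le_mul_self zero_le_two hx])
    _ = 3 * Real.logb 2 x := by simp [Real.logb_pow]

lemma exp_neg_sq_div_sum_logb_le {n : ℕ} (hn : 2 ≤ n) (t : ℝ) :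
    Real.exp (-t ^ 2 / (2 * ↑(∑ _ : Fin n, ((Real.logb 2 (3 * n)).toNNReal / 2) ^ 2 : ℝ≥0))) ≤
      Real.exp (-(t ^ 2) / (32 * n * Real.logb 2 n ^ 2)) := by
  have hn' : (2 : ℝ) ≤ n := by exact_mod_cast hn
  have hl : 1 ≤ Real.logb 2 n := by
    rw [Real.le_logb_iff_rpow_le one_lt_two (by positivity)]; simpa using hn'
  have hL := Real.logb_three_mul_le hn'
  have hL0 : 0 < Real.logb 2 (3 * n) := Real.logb_pos one_lt_two (by linarith)
  have hsum : ↑(∑ _ : Fin n, ((Real.logb 2 (3 * n)).toNNReal / 2) ^ 2 : ℝ≥0) =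
      n * (Real.logb 2 (3 * n) / 2) ^ 2 := by
    simp [Real.coe_toNNReal _ hL0.le]
  rw [hsum, Real.exp_le_exp, neg_div, neg_div, neg_le_neg_iff]
  have hL2 : Real.logb 2 (3 * n) ^ 2 ≤ (3 * Real.logb 2 n) ^ 2 := pow_le_pow_left₀ hL0.le hL 2
  exact div_le_div_of_nonneg_left (sq_nonneg t) (by positivity) (by nlinarith)

theorem concentration_logRamsey_random_graph_general (n : ℕ)
    (p : ENNReal) (hp : p ≤ 1) (t : ℝ) (ht : 0 ≤ t) :
    erdosRenyi n p hp
        {ω : ErdosRenyiOmega n |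
          |logRamsey n ω - ∫ ω', logRamsey n ω' ∂(erdosRenyi n p hp)| > t} ≤
      ENNReal.ofReal
        (2 * Real.exp (-(t ^ 2) / (32 * n * (Real.logb 2 n) ^ 2))) := by
  rcases lt_or_ge n 2 with hn | hn
  · -- `logb 2 n = 0`, so the bound reads `2 * exp (x / 0) = 2`
    refine prob_le_one.trans ?_
    interval_cases n <;> simp
  · have hsub : HasSubgaussianMGF
        (fun ω => logRamsey n ω - ∫ ω', logRamsey n ω' ∂erdosRenyi n p hp) _
        (erdosRenyi n p hp) :=
      hasSubgaussianMGF_logRamsey_sub_integral _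
    refine le_trans (measure_mono fun ω hω => ?_) ((hsub.measure_abs_ge_le ht).trans ?_)
    · exact (show t < _ from hω).le
    exact ENNReal.ofReal_le_ofReal
      (mul_le_mul_of_nonneg_left (exp_neg_sq_div_sum_logb_le hn t) zero_le_two)

/-- Concentration of Ramsey numbers of random graphs: for `G = G_{n,p}` and any `t ≥ 0`,
`P[|log r(G) − E log r(G)| > t] ≤ 2 exp(−t²/(32 n log² n))` (logs base 2). -/
theorem concentration_logRamsey_random_graph (n : ℕ) (hn : 0 < n)
    (p : ENNReal) (hp : p ≤ 1) (t : ℝ) (ht : 0 ≤ t) :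
    erdosRenyi n p hp
        {ω : ErdosRenyiOmega n |
          |logRamsey n ω - ∫ ω', logRamsey n ω' ∂(erdosRenyi n p hp)| > t} ≤
      ENNReal.ofReal
        (2 * Real.exp (-(t ^ 2) / (32 * n * (Real.logb 2 n) ^ 2))) :=
  concentration_logRamsey_random_graph_general n p hp t ht
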